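/- arXiv:1712.01782 — 3 statements merged into one kernel-verified Lean document; each statement's English description precedes it below -/
import Mathlib

section
/- For any ε > 0, the set A^ε of α = (α_1,...,α_d) ∈ T^d (with d ≥ 3) such that for infinitely many tuples (m_1,...,m_d) ∈ N^d one has max_{i=1,...,d} ((m_1···m_d)/m_i) · ‖m_i α_i‖_T < ε, has Lebesgue measure zero. -/
open MeasureTheory

lemma tsum_pi_prod_enn (n : ℕ) (g : ℕ → ENNReal) :
    ∑' m : Fin n → ℕ, ∏ i, g (m i) = (∑' k, g k) ^ n := by
  induction n with
  | zero => rw [tsum_fintype]; simp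
  | succ n ih =>
    rw [← (Fin.consEquiv (fun _ : Fin (n + 1) => ℕ)).tsum_eq, ENNReal.tsum_prod']
    have h : ∀ (a : ℕ) (b : Fin n → ℕ),
        (∏ i, g ((Fin.consEquiv (fun _ : Fin (n + 1) => ℕ)) (a, b) i))
          = g a * ∏ i, g (b i) := by
      intro a b
      rw [Fin.prod_univ_succ]
      simp [Fin.consEquiv]
    simp_rw [h, ENNReal.tsum_mul_left, ih, ENNReal.tsum_mul_right]
    rw [pow_succ, mul_comm]

theorem stmt0 (d : ℕ) (hd : 3 ≤ d) (ε : ℝ) (hε : 0 < ε) :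
    volume {α : Fin d → AddCircle (1 : ℝ) |
      {m : Fin d → ℕ | (∀ i, 1 ≤ m i) ∧
        ∀ i, ((∏ j, (m j : ℝ)) / (m i : ℝ)) * ‖m i • α i‖ < ε}.Infinite} = 0 := by
  set g : ℕ → ENNReal := fun n => ENNReal.ofReal (2 * ε / (n : ℝ) ^ (d - 1)) with hg
  set s : (Fin d → ℕ) → Set (Fin d → AddCircle (1 : ℝ)) := fun m =>
    {α | (∀ i, 1 ≤ m i) ∧ ∀ i, ((∏ j, (m j : ℝ)) / (m i : ℝ)) * ‖m i • α i‖ < ε} with hs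
  have key : ∀ m, volume (s m) ≤ ∏ i, g (m i) := by
    intro m
    by_cases hm : ∀ i, 1 ≤ m i
    · have hM : (0 : ℝ) < ∏ j, (m j : ℝ) :=
        Finset.prod_pos fun j _ => by exact_mod_cast hm j
      set M : ℝ := ∏ j, (m j : ℝ) with hMdef
      have hsub : s m ⊆ Set.pi Set.univ fun i =>
          (fun x : AddCircle (1 : ℝ) => (m i : ℤ) • x) ⁻¹'
            Metric.closedBall 0 (ε * m i / M) := by
        intro α hα i _
        have hmi : (0 : ℝ) < m i := by exact_mod_cast hm i
        have h3 := hα.2 i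
        have hpos : 0 < M / (m i : ℝ) := by positivity
        simp only [Set.mem_preimage, Metric.mem_closedBall, dist_zero_right, natCast_zsmul]
        have hlt : ‖m i • α i‖ < ε / (M / (m i : ℝ)) := (lt_div_iff₀' hpos).mpr h3
        calc ‖m i • α i‖ ≤ ε / (M / (m i : ℝ)) := hlt.le
          _ = ε * m i / M := by rw [div_div_eq_mul_div]
      calc volume (s m) ≤ volume (Set.pi Set.univ fun i =>
            (fun x : AddCircle (1 : ℝ) => (m i : ℤ) • x) ⁻¹'
              Metric.closedBall 0 (ε * m i / M)) := measure_mono hsub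
        _ = ∏ i, volume ((fun x : AddCircle (1 : ℝ) => (m i : ℤ) • x) ⁻¹'
              Metric.closedBall 0 (ε * m i / M)) := volume_pi_pi _
        _ = ∏ i, volume (Metric.closedBall (0 : AddCircle (1 : ℝ)) (ε * m i / M)) := by
            refine Finset.prod_congr rfl fun i _ => ?_
            have hne : ((m i : ℤ)) ≠ 0 := Int.natCast_ne_zero.mpr (Nat.one_le_iff_ne_zero.mp (hm i))
            exact (Measure.measurePreserving_zsmul volume hne).measure_preimage
              measurableSet_closedBall.nullMeasurableSet
        _ ≤ ∏ i, ENNReal.ofReal (2 * ε * m i / M) := by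
            refine Finset.prod_le_prod' fun i _ => ?_
            rw [AddCircle.volume_closedBall]
            refine ENNReal.ofReal_le_ofReal ?_
            calc (1 : ℝ) ⊓ 2 * (ε * m i / M) ≤ 2 * (ε * m i / M) := min_le_right _ _
              _ = 2 * ε * m i / M := by ring
        _ = ∏ i, g (m i) := by
            have hnn : ∀ i ∈ Finset.univ, (0 : ℝ) ≤ 2 * ε * m i / M := fun i _ => by
              have hmi : (0 : ℝ) ≤ m i := Nat.cast_nonneg _
              positivity
            rw [← ENNReal.ofReal_prod_of_nonneg hnn]
            have hmne : ∀ i, (m i : ℝ) ≠ 0 := fun i => by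
              have : (0 : ℝ) < m i := by exact_mod_cast hm i
              exact this.ne'
            have hdd : d - 1 + 1 = d := by omega
            have hprod : ∏ i, (2 * ε * (m i : ℝ) / M) = ∏ i, (2 * ε / (m i : ℝ) ^ (d - 1)) := by
              rw [Finset.prod_div_distrib, Finset.prod_div_distrib, Finset.prod_mul_distrib,
                Finset.prod_const, Finset.prod_const, Finset.prod_pow, Finset.card_univ,
                Fintype.card_fin, ← hMdef]
              rw [← hdd, pow_succ M (d - 1), mul_div_mul_right _ _ hM.ne', Nat.add_sub_cancel]
            rw [hprod, ENNReal.ofReal_prod_of_nonneg]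
            intro i _
            have hmi : (0 : ℝ) < m i := by exact_mod_cast hm i
            positivity
    · have hemp : s m = ∅ := Set.eq_empty_iff_forall_notMem.mpr fun α hα => hm hα.1
      rw [hemp]
      simp
  have hgsum : ∑' k, g k ≠ ⊤ := by
    have hsummable : Summable fun k : ℕ => 2 * ε / (k : ℝ) ^ (d - 1) := by
      have h1 : Summable fun k : ℕ => 1 / (k : ℝ) ^ (d - 1) :=
        Real.summable_one_div_nat_pow.mpr (by omega)
      simpa [div_eq_mul_inv, mul_assoc, one_mul] using h1.mul_left (2 * ε)
    have hnn : ∀ k : ℕ, (0 : ℝ) ≤ 2 * ε / (k : ℝ) ^ (d - 1) := fun k => by positivity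
    rw [hg, ← ENNReal.ofReal_tsum_of_nonneg hnn hsummable]
    exact ENNReal.ofReal_ne_top
  have hsum : ∑' m : Fin d → ℕ, volume (s m) ≠ ⊤ := by
    refine ne_top_of_le_ne_top ?_ (ENNReal.tsum_le_tsum key)
    rw [tsum_pi_prod_enn]
    exact ENNReal.pow_ne_top hgsum
  have hset : {α : Fin d → AddCircle (1 : ℝ) |
      {m : Fin d → ℕ | (∀ i, 1 ≤ m i) ∧
        ∀ i, ((∏ j, (m j : ℝ)) / (m i : ℝ)) * ‖m i • α i‖ < ε}.Infinite}
      = Filter.limsup s Filter.cofinite := by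
    ext α
    rw [Set.mem_setOf_eq, Set.infinite_iff_frequently_cofinite,
      Filter.mem_limsup_iff_frequently_mem]
    exact Iff.rfl
  rw [hset]
  exact measure_limsup_cofinite_eq_zero hsum
end

section
/- Let α_1, α_2 ∈ R \ Q with continued fraction denominators (q_n^{(1)}) and (q_m^{(2)}) respectively. If at least one of α_1, α_2 is not of bounded type, then for every ε > 0 there exist m, n ∈ N such that max( q_m^{(2)} / q_{n+1}^{(1)}, q_n^{(1)} / q_{m+1}^{(2)} ) < ε. -/
/-- `α` is of bounded type if its continued fraction partial quotients are bounded. -/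
def BoundedType (α : ℝ) : Prop :=
  ∃ C : ℝ, ∀ n : ℕ, ∀ b ∈ (GenContFract.of α).partDens.get? n, b ≤ C

open GenContFract

private lemma not_terminatedAt_of_irrational {α : ℝ} (h : Irrational α) (n : ℕ) :
    ¬ (GenContFract.of α).TerminatedAt n := by
  intro ht
  have : (GenContFract.of α).Terminates := ⟨n, ht⟩
  obtain ⟨q, hq⟩ := (terminates_iff_rat α).mp this
  exact h ⟨q, hq.symm⟩

private lemma one_le_den_of_irrational {α : ℝ} (h : Irrational α) (n : ℕ) :
    (1 : ℝ) ≤ (GenContFract.of α).dens n := by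
  have hfib : ((n + 1).fib : ℝ) ≤ (GenContFract.of α).dens n :=
    succ_nth_fib_le_of_nth_den (Or.inr (not_terminatedAt_of_irrational h _))
  have : (1 : ℕ) ≤ (n + 1).fib := Nat.fib_pos.mpr n.succ_pos
  calc (1 : ℝ) ≤ ((n + 1).fib : ℝ) := by exact_mod_cast this
    _ ≤ _ := hfib

private lemma exists_den_ge {α : ℝ} (h : Irrational α) (X : ℝ) :
    ∃ m : ℕ, X ≤ (GenContFract.of α).dens m := by
  refine ⟨max 5 ⌈X⌉₊, ?_⟩
  have hm : 5 ≤ max 5 ⌈X⌉₊ := le_max_left _ _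
  have hfib : ((max 5 ⌈X⌉₊ + 1).fib : ℝ) ≤ (GenContFract.of α).dens (max 5 ⌈X⌉₊) :=
    succ_nth_fib_le_of_nth_den (Or.inr (not_terminatedAt_of_irrational h _))
  have h1 : max 5 ⌈X⌉₊ + 1 ≤ (max 5 ⌈X⌉₊ + 1).fib := Nat.le_fib_self (by omega)
  have h2 : ⌈X⌉₊ ≤ max 5 ⌈X⌉₊ + 1 := le_trans (le_max_right _ _) (Nat.le_succ _)
  have : X ≤ ((max 5 ⌈X⌉₊ + 1).fib : ℝ) := by
    calc X ≤ (⌈X⌉₊ : ℝ) := Nat.le_ceil X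
      _ ≤ ((max 5 ⌈X⌉₊ + 1) : ℕ) := by exact_mod_cast h2
      _ ≤ _ := by exact_mod_cast h1
  linarith

private lemma key (β γ : ℝ) (hβ : Irrational β) (hγ : Irrational γ)
    (hb : ¬ BoundedType β) {ε : ℝ} (hε : 0 < ε) :
    ∃ m n : ℕ,
      max ((GenContFract.of γ).dens m / (GenContFract.of β).dens (n + 1)) ((GenContFract.of β).dens n / (GenContFract.of γ).dens (m + 1)) < ε := by
  simp only [BoundedType, not_exists, not_forall] at hb
  obtain ⟨n, b, hb_mem, hb_gt⟩ := hb (1 / ε + 1 / ε ^ 2)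
  push_neg at hb_gt
  set q : ℕ → ℝ := (GenContFract.of β).dens with hq
  set r : ℕ → ℝ := (GenContFract.of γ).dens with hr
  have hqn1 : (1 : ℝ) ≤ q n := one_le_den_of_irrational hβ n
  have hrec : b * q n ≤ q (n + 1) := le_of_succ_get?_den hb_mem
  have hε2 : (0 : ℝ) < ε ^ 2 := by positivity
  have hqbig : (1 / ε + 1 / ε ^ 2) * q n < q (n + 1) := by
    have : (1 / ε + 1 / ε ^ 2) * q n < b * q n :=
      mul_lt_mul_of_pos_right hb_gt (lt_of_lt_of_le one_pos hqn1)
    linarith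
  set X : ℝ := ε * q (n + 1) with hX
  have hA : 1 < X := by
    have h1 : 1 / ε * q n + 1 / ε ^ 2 * q n < q (n + 1) := by linarith [hqbig]
    have h2 : 1 / ε ≤ 1 / ε * q n := le_mul_of_one_le_right (by positivity) hqn1
    have h3 : 0 ≤ 1 / ε ^ 2 * q n := by positivity
    have : 1 / ε < q (n + 1) := by linarith
    rw [hX]
    calc (1 : ℝ) = ε * (1 / ε) := by field_simp
      _ < ε * q (n + 1) := by exact mul_lt_mul_of_pos_left this hε
  have hB : q n / ε < X := by
    have h1 : 1 / ε * q n + 1 / ε ^ 2 * q n < q (n + 1) := by linarith [hqbig]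
    have h2 : 0 ≤ 1 / ε * q n := by positivity
    have h3 : 1 / ε ^ 2 * q n < q (n + 1) := by linarith
    have : q n / ε < ε * q (n + 1) := by
      have := mul_lt_mul_of_pos_left h3 hε
      calc q n / ε = ε * (1 / ε ^ 2 * q n) := by field_simp
        _ < ε * q (n + 1) := this
    exact this
  -- find minimal m' with X ≤ r m'
  have hex : ∃ m : ℕ, X ≤ r m := exists_den_ge hγ X
  classical
  set m' := Nat.find hex with hm'
  have hm'_spec : X ≤ r m' := Nat.find_spec hex
  have hm'_pos : m' ≠ 0 := by
    intro h0
    have : r 0 = 1 := zeroth_den_eq_one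
    rw [h0, this] at hm'_spec
    linarith
  obtain ⟨k, hk⟩ : ∃ k, m' = k + 1 := ⟨m' - 1, by omega⟩
  have hrk : r k < X := by
    by_contra hcon
    push_neg at hcon
    have : m' ≤ k := Nat.find_le hcon
    omega
  have hq1pos : (0 : ℝ) < q (n + 1) := lt_of_lt_of_le one_pos (one_le_den_of_irrational hβ _)
  have hrk1pos : (0 : ℝ) < r (k + 1) := lt_of_lt_of_le one_pos (one_le_den_of_irrational hγ _)
  refine ⟨k, n, max_lt ?_ ?_⟩
  · rw [div_lt_iff₀ hq1pos]
    calc r k < X := hrk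
      _ = ε * q (n + 1) := rfl
  · rw [div_lt_iff₀ hrk1pos]
    have : X ≤ r (k + 1) := hk ▸ hm'_spec
    have h4 : q n / ε < r (k + 1) := lt_of_lt_of_le hB this
    calc q n = ε * (q n / ε) := by field_simp
      _ < ε * r (k + 1) := mul_lt_mul_of_pos_left h4 hε

theorem stmt3 (α₁ α₂ : ℝ) (h₁ : Irrational α₁) (h₂ : Irrational α₂)
    (h : ¬ BoundedType α₁ ∨ ¬ BoundedType α₂) (ε : ℝ) (hε : 0 < ε) :
    ∃ m n : ℕ,
      max ((GenContFract.of α₂).dens m / (GenContFract.of α₁).dens (n + 1))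
        ((GenContFract.of α₁).dens n / (GenContFract.of α₂).dens (m + 1)) < ε := by
  rcases h with h | h
  · exact key α₁ α₂ h₁ h₂ h hε
  · obtain ⟨m, n, hmn⟩ := key α₂ α₁ h₂ h₁ h hε
    exact ⟨n, m, by rwa [max_comm]⟩
end

section
/- Let α_1, α_2 ∈ R \ Q. There exists a sequence τ^{(n)} = (τ_1^{(n)}, τ_2^{(n)}) ∈ N^2 with τ_2^{(n)} ‖τ_1^{(n)} α_1‖_T → 0 and τ_1^{(n)} ‖τ_2^{(n)} α_2‖_T → 0 as n → ∞ if and only if not both α_1 and α_2 are of bounded type. -/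
open Filter

/-- Distance of a real number to the nearest integer. -/
noncomputable def normT (x : ℝ) : ℝ := ‖(x : AddCircle (1 : ℝ))‖

namespace Stmt5Aux

open GenContFract

lemma normT_eq (x : ℝ) : normT x = |x - round x| := by
  rw [normT, AddCircle.norm_eq]; simp

lemma normT_nonneg (x : ℝ) : 0 ≤ normT x := norm_nonneg _

lemma normT_le (x : ℝ) (m : ℤ) : normT x ≤ |x - m| := by
  rw [normT_eq]; exact round_le x m

lemma normT_pos {α : ℝ} (h : Irrational α) {k : ℕ} (hk : 1 ≤ k) :
    0 < normT ((k : ℝ) * α) := by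
  rw [normT_eq]
  have hk0 : (k : ℝ) ≠ 0 := by positivity
  rcases eq_or_lt_of_le (abs_nonneg ((k:ℝ) * α - round ((k:ℝ)*α))) with he | h'
  · exfalso
    have heq : (k : ℝ) * α = round ((k:ℝ)*α) := by
      have := abs_eq_zero.mp he.symm
      linarith
    apply h
    refine ⟨((round ((k:ℝ)*α) : ℚ)) / (k : ℚ), ?_⟩
    push_cast
    field_simp
    linarith [heq]
  · exact h'

lemma not_term {α : ℝ} (h : Irrational α) (n : ℕ) :
    ¬(GenContFract.of α).TerminatedAt n := by
  intro hterm
  obtain ⟨q, hq⟩ := (terminates_iff_rat α).mp ⟨n, hterm⟩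
  exact h ⟨q, hq.symm⟩

lemma one_le_dens {α : ℝ} (h : Irrational α) (n : ℕ) : 1 ≤ (GenContFract.of α).dens n := by
  have h2 := succ_nth_fib_le_of_nth_den (v := α) (n := n) (Or.inr (not_term h _))
  calc (1:ℝ) = ((1:ℕ):ℝ) := by norm_num
  _ ≤ (Nat.fib (n+1) : ℝ) := by exact_mod_cast Nat.fib_pos.mpr n.succ_pos
  _ ≤ _ := h2

lemma exists_gp {α : ℝ} (h : Irrational α) (n : ℕ) :
    ∃ gp : GenContFract.Pair ℝ, (GenContFract.of α).s.get? n = some gp ∧ gp.a = 1 ∧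
      1 ≤ gp.b ∧ ∃ z : ℤ, gp.b = z := by
  obtain ⟨gp, hgp⟩ := Option.ne_none_iff_exists'.1
    (mt terminatedAt_iff_s_none.mpr (not_term h n))
  refine ⟨gp, hgp, of_partNum_eq_one (partNum_eq_s_a hgp), 
    of_one_le_get?_partDen (partDen_eq_s_b hgp), 
    exists_int_eq_of_partDen (partDen_eq_s_b hgp)⟩

lemma contsAux_int {α : ℝ} (h : Irrational α) :
    ∀ n, (∃ A : ℤ, ((GenContFract.of α).contsAux n).a = A) ∧
      (∃ B : ℤ, ((GenContFract.of α).contsAux n).b = B) := by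
  intro n
  induction n using Nat.strong_induction_on with
  | _ n ih =>
    match n with
    | 0 => exact ⟨⟨1, by simp [GenContFract.contsAux]⟩, ⟨0, by simp [GenContFract.contsAux]⟩⟩
    | 1 =>
      refine ⟨⟨⌊α⌋, ?_⟩, ⟨1, by simp [GenContFract.contsAux]⟩⟩
      show (GenContFract.of α).h = _
      rw [of_h_eq_floor]
    | (n+2) =>
      obtain ⟨gp, hgp, ha, hb1, z, hz⟩ := exists_gp h n
      obtain ⟨⟨A0, hA0⟩, ⟨B0, hB0⟩⟩ := ih n (by omega)
      obtain ⟨⟨A1, hA1⟩, ⟨B1, hB1⟩⟩ := ih (n+1) (by omega)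
      rw [contsAux_recurrence hgp rfl rfl]
      constructor
      · exact ⟨z * A1 + A0, by push_cast [hz, ha, hA0, hA1]; ring⟩
      · exact ⟨z * B1 + B0, by push_cast [hz, ha, hB0, hB1]; ring⟩

lemma dens_int {α : ℝ} (h : Irrational α) (n : ℕ) :
    ∃ B : ℤ, (GenContFract.of α).dens n = B := by
  rw [den_eq_conts_b, nth_cont_eq_succ_nth_contAux]
  exact (contsAux_int h (n+1)).2

lemma nums_int {α : ℝ} (h : Irrational α) (n : ℕ) :
    ∃ A : ℤ, (GenContFract.of α).nums n = A := by
  rw [num_eq_conts_a, nth_cont_eq_succ_nth_contAux]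
  exact (contsAux_int h (n+1)).1

lemma dens_pos {α : ℝ} (h : Irrational α) (n : ℕ) : 0 < (GenContFract.of α).dens n :=
  lt_of_lt_of_le one_pos (one_le_dens h n)

lemma det_eq {α : ℝ} (h : Irrational α) (n : ℕ) :
    (GenContFract.of α).nums n * (GenContFract.of α).dens (n+1) -
      (GenContFract.of α).dens n * (GenContFract.of α).nums (n+1) = (-1)^(n+1) :=
  SimpContFract.determinant (s := SimpContFract.of α) (not_term h n)

lemma conv_diff {α : ℝ} (h : Irrational α) (n : ℕ) :
    |(GenContFract.of α).convs (n+1) - (GenContFract.of α).convs n| =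
      1 / ((GenContFract.of α).dens n * (GenContFract.of α).dens (n+1)) := by
  have hBn := dens_pos h n
  have hBn1 := dens_pos h (n+1)
  have hdet := det_eq h n
  rw [conv_eq_num_div_den, conv_eq_num_div_den,
    div_sub_div _ _ hBn1.ne' hBn.ne']
  have hnum : (GenContFract.of α).nums (n+1) * (GenContFract.of α).dens n -
      (GenContFract.of α).dens (n+1) * (GenContFract.of α).nums n = -(-1)^(n+1) := by
    linarith [hdet]
  rw [hnum, abs_div, abs_neg, abs_pow, abs_neg, abs_one, one_pow,
    abs_of_pos (by positivity : (0:ℝ) < (GenContFract.of α).dens (n+1) * (GenContFract.of α).dens n),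
    mul_comm ((GenContFract.of α).dens (n+1))]

/-- dens (n+2) = b * dens (n+1) + dens n with 1 ≤ b. -/
lemma dens_rec {α : ℝ} (h : Irrational α) (n : ℕ) :
    ∃ b : ℝ, 1 ≤ b ∧ (∃ z : ℤ, b = z) ∧
      (GenContFract.of α).partDens.get? (n+1) = some b ∧
      (GenContFract.of α).dens (n+2) = b * (GenContFract.of α).dens (n+1) +
        (GenContFract.of α).dens n := by
  obtain ⟨gp, hgp, ha, hb1, hz⟩ := exists_gp h (n+1)
  refine ⟨gp.b, hb1, hz, partDen_eq_s_b hgp, ?_⟩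
  have := dens_recurrence (g := GenContFract.of α) hgp rfl rfl
  rw [this, ha]; ring

lemma dens_add_le {α : ℝ} (h : Irrational α) (n : ℕ) :
    (GenContFract.of α).dens (n+1) + (GenContFract.of α).dens n ≤
      (GenContFract.of α).dens (n+2) := by
  obtain ⟨b, hb1, _, _, hrec⟩ := dens_rec h n
  rw [hrec]
  have := dens_pos h (n+1)
  nlinarith

lemma abs_sub_conv_ge {α : ℝ} (h : Irrational α) (n : ℕ) :
    1 / (2 * ((GenContFract.of α).dens n * (GenContFract.of α).dens (n+1))) ≤
      |α - (GenContFract.of α).convs n| := by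
  set g := GenContFract.of α with hg
  have hBn := dens_pos h n
  have hBn1 := dens_pos h (n+1)
  have hBn2 := dens_pos h (n+2)
  have hub : |α - g.convs (n+1)| ≤ 1 / (g.dens (n+1) * g.dens (n+2)) :=
    abs_sub_convs_le (not_term h (n+1))
  have hdiff := conv_diff h n
  have htri : |g.convs (n+1) - g.convs n| ≤ |g.convs (n+1) - α| + |α - g.convs n| :=
    abs_sub_le _ α _
  have habs : |g.convs (n+1) - α| = |α - g.convs (n+1)| := abs_sub_comm _ _
  have hmono : g.dens n ≤ g.dens (n+1) := of_den_mono
  have h2B : 2 * g.dens n ≤ g.dens (n+2) := by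
    have := dens_add_le h n
    linarith
  have key : 1/(g.dens (n+1) * g.dens (n+2)) ≤ 1/(2*(g.dens n * g.dens (n+1))) := by
    apply one_div_le_one_div_of_le (by positivity)
    nlinarith
  have hhalf : 1 / (g.dens n * g.dens (n+1)) =
      2 * (1/(2*(g.dens n * g.dens (n+1)))) := by
    have : g.dens n * g.dens (n+1) ≠ 0 := by positivity
    field_simp
  linarith [hub, htri, hdiff, habs, key, hhalf]

lemma dens_succ_le {α : ℝ} (h : Irrational α) {C : ℝ}
    (hC : ∀ n : ℕ, ∀ b ∈ (GenContFract.of α).partDens.get? n, b ≤ C) (n : ℕ) :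
    (GenContFract.of α).dens (n+1) ≤ (C+1) * (GenContFract.of α).dens n := by
  cases n with
  | zero =>
    obtain ⟨gp, hgp, ha, hb1, hz⟩ := exists_gp h 0
    have hd1 : (GenContFract.of α).dens 1 = gp.b := first_den_eq hgp
    have hd0 : (GenContFract.of α).dens 0 = 1 := zeroth_den_eq_one
    have hbC : gp.b ≤ C := hC 0 gp.b (Option.mem_def.mpr (partDen_eq_s_b hgp))
    rw [hd1, hd0]; linarith
  | succ m =>
    obtain ⟨b, hb1, _, hmem, hrec⟩ := dens_rec h m
    have hbC : b ≤ C := hC (m+1) b (Option.mem_def.mpr hmem)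
    have hmono : (GenContFract.of α).dens m ≤ (GenContFract.of α).dens (m+1) :=
      of_den_mono
    have hp := dens_pos h m
    have hp1 := dens_pos h (m+1)
    rw [hrec]; nlinarith

lemma badly {α : ℝ} (h : Irrational α) (hbt : BoundedType α) :
    ∃ c : ℝ, 0 < c ∧ ∀ k : ℕ, 1 ≤ k → c / k ≤ normT ((k:ℝ) * α) := by
  obtain ⟨C, hC⟩ := hbt
  have hC1 : 1 ≤ C := by
    obtain ⟨gp, hgp, _, hb1, _⟩ := exists_gp h 0
    exact le_trans hb1 (hC 0 gp.b (Option.mem_def.mpr (partDen_eq_s_b hgp)))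
  refine ⟨1/(2*(C+1)), by positivity, fun k hk => ?_⟩
  have hkR : (1:ℝ) ≤ (k:ℝ) := by exact_mod_cast hk
  have hk0 : (0:ℝ) < (k:ℝ) := by linarith
  by_cases hcase : 1/(2*(k:ℝ)) ≤ normT ((k:ℝ)*α)
  · refine le_trans ?_ hcase
    rw [div_div]
    apply one_div_le_one_div_of_le (by positivity)
    nlinarith
  · push_neg at hcase
    set p : ℤ := round ((k:ℝ)*α) with hp
    set q : ℚ := (p : ℚ)/(k : ℚ) with hq
    have hqR : (q:ℝ) = (p:ℝ)/(k:ℝ) := by push_cast [hq]; norm_num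
    have hnt : normT ((k:ℝ)*α) = |(k:ℝ)*α - p| := normT_eq _
    have hαq : |α - q| = normT ((k:ℝ)*α)/(k:ℝ) := by
      rw [hnt, hqR, eq_div_iff hk0.ne', ← abs_of_pos hk0, ← abs_mul]
      congr 1
      field_simp
      rw [abs_of_pos hk0]
      ring
    have hden_le : (q.den : ℝ) ≤ (k:ℝ) := by
      have hdvd : (q.den : ℤ) ∣ (k : ℤ) := by
        have h0 : q = (p : ℚ)/((k:ℤ):ℚ) := by rw [hq]; norm_num
        rw [h0, Rat.intCast_div_eq_divInt]
        exact Rat.den_dvd p (k:ℤ)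
      have : (q.den : ℤ) ≤ (k : ℤ) :=
        Int.le_of_dvd (by exact_mod_cast hk0) hdvd
      exact_mod_cast this
    have hden1 : (1:ℝ) ≤ (q.den : ℝ) := by exact_mod_cast q.pos
    have hlt : |α - (q:ℝ)| < 1/(2*(q.den:ℝ)^2) := by
      rw [hαq]
      rw [div_lt_div_iff₀ hk0 (by positivity)]
      have h1a : normT ((k:ℝ)*α) * (2*(q.den:ℝ)^2) ≤ normT ((k:ℝ)*α) * (2*(k:ℝ)^2) := by
        apply mul_le_mul_of_nonneg_left ?_ (normT_nonneg _)
        nlinarith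
      have h1b : normT ((k:ℝ)*α) * (2*(k:ℝ)^2) < (1/(2*(k:ℝ))) * (2*(k:ℝ)^2) :=
        mul_lt_mul_of_pos_right hcase (by positivity)
      have h1 : normT ((k:ℝ)*α) * (2*(q.den:ℝ)^2) < (1/(2*(k:ℝ))) * (2*(k:ℝ)^2) :=
        lt_of_le_of_lt h1a h1b
      have h2 : (1/(2*(k:ℝ))) * (2*(k:ℝ)^2) = 1 * (k:ℝ) := by
        field_simp
      linarith
    obtain ⟨n, hn⟩ := Real.exists_convs_eq_rat hlt
    -- dens n ≤ k via coprimality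
    obtain ⟨B, hB⟩ := dens_int h n
    obtain ⟨A, hA⟩ := nums_int h n
    obtain ⟨B', hB'⟩ := dens_int h (n+1)
    obtain ⟨A', hA'⟩ := nums_int h (n+1)
    have hBpos : (0:ℝ) < B := hB ▸ dens_pos h n
    have hBZpos : 0 < B := by exact_mod_cast hBpos
    have hdet : A * B' - B * A' = (-1)^(n+1) := by
      have := det_eq h n
      rw [hA, hB, hA', hB'] at this
      exact_mod_cast this
    have hcop : IsCoprime B A := by
      rw [Int.isCoprime_iff_gcd_eq_one]
      have hg : (Int.gcd B A : ℤ) ∣ (-1)^(n+1) := by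
        rw [← hdet]
        exact dvd_sub ((Int.gcd_dvd_right (a := B) (b := A)).mul_right B') ((Int.gcd_dvd_left (a := B) (b := A)).mul_right A')
      have h1 : (Int.gcd B A : ℤ) ∣ 1 := hg.trans ((isUnit_one.neg.pow (n+1)).dvd)
      have h2 : (Int.gcd B A : ℤ) = 1 :=
        Int.eq_one_of_dvd_one (Int.natCast_nonneg _) h1
      exact_mod_cast h2
    -- q = A / B as reals
    have hconv : (GenContFract.of α).convs n = (A:ℝ)/(B:ℝ) := by
      rw [conv_eq_num_div_den, hA, hB]
    have hABpk : A * (k:ℤ) = B * p := by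
      have hR : (A:ℝ) * (k:ℝ) = (B:ℝ) * (p:ℝ) := by
        have : (A:ℝ)/(B:ℝ) = (p:ℝ)/(k:ℝ) := by rw [← hconv, hn, hqR]
        rw [div_eq_div_iff hBpos.ne' hk0.ne'] at this
        linarith [this]
      exact_mod_cast hR
    have hBdvdk : B ∣ (k:ℤ) := by
      apply hcop.dvd_of_dvd_mul_left
      exact ⟨p, by linarith [hABpk]⟩
    have hBlek : (B:ℝ) ≤ (k:ℝ) := by
      have : B ≤ (k:ℤ) := Int.le_of_dvd (by exact_mod_cast hk0) hBdvdk
      exact_mod_cast this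
    -- lower bound
    have hlow := abs_sub_conv_ge h n
    have hd1 : (GenContFract.of α).dens (n+1) ≤ (C+1) * (GenContFract.of α).dens n :=
      dens_succ_le h hC n
    have hdn : (GenContFract.of α).dens n ≤ (k:ℝ) := by rw [hB]; exact hBlek
    have hdnpos := dens_pos h n
    have hfin : 1/(2*((C+1)*(k:ℝ)^2)) ≤ |α - (GenContFract.of α).convs n| := by
      refine le_trans ?_ hlow
      apply one_div_le_one_div_of_le
        (mul_pos two_pos (mul_pos hdnpos (dens_pos h (n+1))))
      have hsq : (GenContFract.of α).dens n * (GenContFract.of α).dens n ≤ (k:ℝ)*(k:ℝ) :=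
        mul_le_mul hdn hdn hdnpos.le hk0.le
      have : (GenContFract.of α).dens n * (GenContFract.of α).dens (n+1) ≤
          (C+1) * (k:ℝ)^2 := by
        calc (GenContFract.of α).dens n * (GenContFract.of α).dens (n+1)
            ≤ (GenContFract.of α).dens n * ((C+1) * (GenContFract.of α).dens n) := by
              apply mul_le_mul_of_nonneg_left hd1 hdnpos.le
          _ ≤ (C+1) * (k:ℝ)^2 := by nlinarith [hsq, hC1]
      linarith
    have hq_conv : |α - (GenContFract.of α).convs n| = normT ((k:ℝ)*α)/(k:ℝ) := by
      rw [hn]; exact hαq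
    rw [hq_conv] at hfin
    have hkne : (k:ℝ) ≠ 0 := hk0.ne'
    rw [div_le_iff₀ hk0]
    calc 1/(2*(C+1)) = (k:ℝ)^2 * (1/(2*((C+1)*(k:ℝ)^2))) := by
          rw [mul_one_div, show 2*((C+1)*(k:ℝ)^2) = (k:ℝ)^2*(2*(C+1)) by ring,
            ← div_div ((k:ℝ)^2) ((k:ℝ)^2) (2*(C+1)),
            div_self (by positivity : ((k:ℝ)^2) ≠ 0)]
      _ ≤ (k:ℝ)^2 * (normT ((k:ℝ)*α)/(k:ℝ)) := by
          apply mul_le_mul_of_nonneg_left hfin (by positivity)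
      _ = normT ((k:ℝ)*α) * (k:ℝ) := by
          field_simp

lemma approx_unbdd {α : ℝ} (h : Irrational α) (hbt : ¬BoundedType α) (ε : ℝ) (hε : 0 < ε) :
    ∃ k : ℕ, 1 ≤ k ∧ (k:ℝ) * normT ((k:ℝ) * α) < ε := by
  rw [BoundedType] at hbt
  push_neg at hbt
  obtain ⟨n, b, hmem, hgt⟩ := hbt (2/ε)
  have hmem' : (GenContFract.of α).partDens.get? n = some b := Option.mem_def.mp hmem
  have hb1 : (1:ℝ) ≤ b := of_one_le_get?_partDen hmem'
  have hbpos : (0:ℝ) < b := by linarith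
  have hub := abs_sub_convergents_le' hmem'
  obtain ⟨B, hB⟩ := dens_int h n
  obtain ⟨A, hA⟩ := nums_int h n
  have hdpos := dens_pos h n
  have hd1 := one_le_dens h n
  have hBpos : 0 < B := by
    have : (0:ℝ) < (B:ℝ) := hB ▸ hdpos
    exact_mod_cast this
  set k : ℕ := B.toNat with hk
  have hkB : (k:ℝ) = (GenContFract.of α).dens n := by
    rw [hB, hk]
    exact_mod_cast Int.toNat_of_nonneg hBpos.le
  have hk1 : 1 ≤ k := by
    rw [hk]
    omega
  refine ⟨k, hk1, ?_⟩
  have hnt : normT ((k:ℝ)*α) ≤ |(k:ℝ)*α - (A:ℝ)| := normT_le _ A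
  have heq : |(k:ℝ)*α - (A:ℝ)| =
      (GenContFract.of α).dens n * |α - (GenContFract.of α).convs n| := by
    rw [conv_eq_num_div_den, hA, hkB,
      show α - (A:ℝ)/(GenContFract.of α).dens n
        = ((GenContFract.of α).dens n * α - A)/(GenContFract.of α).dens n from
          by field_simp,
      abs_div, abs_of_pos hdpos]
    field_simp
  have hprod : (k:ℝ) * normT ((k:ℝ)*α) ≤
      (GenContFract.of α).dens n * (GenContFract.of α).dens n *
        |α - (GenContFract.of α).convs n| := by
    calc (k:ℝ) * normT ((k:ℝ)*α) ≤ (k:ℝ) * |(k:ℝ)*α - (A:ℝ)| :=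
          mul_le_mul_of_nonneg_left hnt (by positivity)
      _ = _ := by rw [heq, hkB]; ring
  have h2 : (GenContFract.of α).dens n * (GenContFract.of α).dens n *
      |α - (GenContFract.of α).convs n| ≤
      (GenContFract.of α).dens n * (GenContFract.of α).dens n *
        (1 / (b * (GenContFract.of α).dens n * (GenContFract.of α).dens n)) :=
    mul_le_mul_of_nonneg_left hub (by nlinarith)
  have h3 : (GenContFract.of α).dens n * (GenContFract.of α).dens n *
      (1 / (b * (GenContFract.of α).dens n * (GenContFract.of α).dens n)) = 1 / b := by
    field_simp
  have h4 : 1/b < ε := by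
    have := one_div_lt_one_div_of_lt (by positivity : (0:ℝ) < 2/ε) hgt
    rw [one_div_div] at this
    linarith
  linarith

lemma step {α : ℝ} (β : ℝ) (hα : Irrational α) (hbt : ¬BoundedType α) (m : ℕ) :
    ∃ k Q : ℕ, 1 ≤ k ∧ 1 ≤ Q ∧
      (Q:ℝ) * normT ((k:ℝ) * α) ≤ Real.sqrt (1/((m:ℝ)+1)) + 1/((m:ℝ)+1) ∧
      (k:ℝ) * normT ((Q:ℝ) * β) ≤ Real.sqrt (1/((m:ℝ)+1)) + 1/((m:ℝ)+1) := by
  set ε : ℝ := 1/((m:ℝ)+1) with hε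
  have hεpos : 0 < ε := by positivity
  obtain ⟨k, hk1, hkδ⟩ := approx_unbdd hα hbt ε hεpos
  set δ := normT ((k:ℝ)*α) with hδ
  have hδpos : 0 < δ := normT_pos hα hk1
  have hkpos : (0:ℝ) < (k:ℝ) := by exact_mod_cast hk1
  set S := Real.sqrt ((k:ℝ)*δ) with hS
  set T := Real.sqrt ((k:ℝ)/δ) with hT
  have hSpos : 0 < S := Real.sqrt_pos.mpr (by positivity)
  have hTpos : 0 < T := Real.sqrt_pos.mpr (by positivity)
  have hST : S * T = (k:ℝ) := by
    rw [hS, hT, ← Real.sqrt_mul (by positivity) _,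
      show (k:ℝ)*δ*((k:ℝ)/δ) = (k:ℝ)^2 by field_simp]
    exact Real.sqrt_sq hkpos.le
  have hSS : S * S = (k:ℝ)*δ := Real.mul_self_sqrt (by positivity)
  have hSle : S ≤ Real.sqrt ε := by
    rw [hS]
    exact Real.sqrt_le_sqrt hkδ.le
  have hk1R : (1:ℝ) ≤ (k:ℝ) := by exact_mod_cast hk1
  have hδε : δ < ε := by nlinarith
  set N : ℕ := ⌈T⌉₊ with hN
  have hNpos : 0 < N := by rw [hN]; exact Nat.ceil_pos.mpr hTpos
  obtain ⟨Q, hQpos, hQN, hQapprox⟩ := Real.exists_nat_abs_mul_sub_round_le β hNpos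
  have hQnt : normT ((Q:ℝ)*β) ≤ 1/((N:ℝ)+1) := by
    rw [normT_eq]; exact hQapprox
  have hTδ : T * δ = S := by
    have hTeq : T = (k:ℝ)/S := by
      rw [eq_div_iff hSpos.ne']
      linarith [hST]
    rw [hTeq]
    field_simp
    linarith [hSS]
  refine ⟨k, Q, hk1, hQpos, ?_, ?_⟩
  · have h1 : (Q:ℝ) ≤ (N:ℝ) := by exact_mod_cast hQN
    have h2 : (N:ℝ) ≤ T + 1 := by
      rw [hN]; exact (Nat.ceil_lt_add_one hTpos.le).le
    have h3 : (Q:ℝ) * δ ≤ (T+1) * δ := by nlinarith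
    have h4 : (T+1)*δ = S + δ := by rw [add_mul, one_mul, hTδ]
    linarith
  · have hTN : T ≤ (N:ℝ)+1 := by
      have := Nat.le_ceil T
      rw [← hN] at this
      linarith
    have hkQ : (k:ℝ) * normT ((Q:ℝ)*β) ≤ (k:ℝ)/((N:ℝ)+1) := by
      rw [div_eq_mul_one_div]
      exact mul_le_mul_of_nonneg_left hQnt hkpos.le
    have h5 : (k:ℝ)/((N:ℝ)+1) ≤ (k:ℝ)/T :=
      div_le_div_of_nonneg_left hkpos.le hTpos hTN
    have h6 : (k:ℝ)/T = S := by
      rw [eq_comm, eq_div_iff hTpos.ne']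
      exact hST
    linarith

lemma construct {α : ℝ} (β : ℝ) (hα : Irrational α) (hbt : ¬BoundedType α) :
    ∃ τ₁ τ₂ : ℕ → ℕ, (∀ n, 1 ≤ τ₁ n ∧ 1 ≤ τ₂ n) ∧
      Tendsto (fun n => (τ₂ n : ℝ) * normT ((τ₁ n : ℝ) * α)) atTop (nhds 0) ∧
      Tendsto (fun n => (τ₁ n : ℝ) * normT ((τ₂ n : ℝ) * β)) atTop (nhds 0) := by
  choose k Q hk hQ hb1 hb2 using step β hα hbt
  have h0 : Tendsto (fun m : ℕ => 1/((m:ℝ)+1)) atTop (nhds 0) :=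
    tendsto_one_div_add_atTop_nhds_zero_nat
  have hs : Tendsto (fun m : ℕ => Real.sqrt (1/((m:ℝ)+1))) atTop (nhds 0) := by
    have h' := (Real.continuous_sqrt.tendsto 0).comp h0
    rw [Real.sqrt_zero] at h'
    exact h'.congr (fun m => rfl)
  have hbound : Tendsto (fun m : ℕ => Real.sqrt (1/((m:ℝ)+1)) + 1/((m:ℝ)+1))
      atTop (nhds 0) := by
    simpa using hs.add h0
  refine ⟨k, Q, fun n => ⟨hk n, hQ n⟩, ?_, ?_⟩
  · exact squeeze_zero
      (fun n => mul_nonneg (Nat.cast_nonneg _) (normT_nonneg _)) hb1 hbound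
  · exact squeeze_zero
      (fun n => mul_nonneg (Nat.cast_nonneg _) (normT_nonneg _)) hb2 hbound

end Stmt5Aux

theorem stmt5 (α₁ α₂ : ℝ) (h₁ : Irrational α₁) (h₂ : Irrational α₂) :
    (∃ τ₁ τ₂ : ℕ → ℕ, (∀ n, 1 ≤ τ₁ n ∧ 1 ≤ τ₂ n) ∧
        Tendsto (fun n => (τ₂ n : ℝ) * normT ((τ₁ n : ℝ) * α₁)) atTop (nhds 0) ∧
        Tendsto (fun n => (τ₁ n : ℝ) * normT ((τ₂ n : ℝ) * α₂)) atTop (nhds 0))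
      ↔ ¬ (BoundedType α₁ ∧ BoundedType α₂) := by
  constructor
  · rintro ⟨τ₁, τ₂, hpos, ht1, ht2⟩ ⟨hb1, hb2⟩
    obtain ⟨c₁, hc₁, hA1⟩ := Stmt5Aux.badly h₁ hb1
    obtain ⟨c₂, hc₂, hA2⟩ := Stmt5Aux.badly h₂ hb2
    have hprod := ht1.mul ht2
    rw [mul_zero] at hprod
    have hlow : ∀ n, c₁ * c₂ ≤
        (τ₂ n : ℝ) * normT ((τ₁ n:ℝ)*α₁) * ((τ₁ n:ℝ) * normT ((τ₂ n:ℝ)*α₂)) := by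
      intro n
      obtain ⟨h1n, h2n⟩ := hpos n
      have ht1p : (0:ℝ) < (τ₁ n : ℝ) := by exact_mod_cast h1n
      have ht2p : (0:ℝ) < (τ₂ n : ℝ) := by exact_mod_cast h2n
      have e1 : c₁ / (τ₁ n : ℝ) ≤ normT ((τ₁ n:ℝ)*α₁) := hA1 _ h1n
      have e2 : c₂ / (τ₂ n : ℝ) ≤ normT ((τ₂ n:ℝ)*α₂) := hA2 _ h2n
      calc c₁ * c₂ = ((τ₂ n:ℝ) * (c₁/(τ₁ n:ℝ))) * ((τ₁ n:ℝ) * (c₂/(τ₂ n:ℝ))) := by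
            field_simp
        _ ≤ _ := by
            apply mul_le_mul (mul_le_mul_of_nonneg_left e1 ht2p.le)
              (mul_le_mul_of_nonneg_left e2 ht1p.le)
              (mul_nonneg ht1p.le (div_nonneg hc₂.le ht2p.le))
              (mul_nonneg ht2p.le (Stmt5Aux.normT_nonneg _))
    have hle : c₁ * c₂ ≤ 0 := ge_of_tendsto' hprod hlow
    nlinarith
  · intro hnot
    by_cases hb1 : BoundedType α₁
    · have hb2 : ¬BoundedType α₂ := fun hb2 => hnot ⟨hb1, hb2⟩
      obtain ⟨σ₁, σ₂, hp, ha, hb⟩ := Stmt5Aux.construct α₁ h₂ hb2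
      exact ⟨σ₂, σ₁, fun n => ⟨(hp n).2, (hp n).1⟩, hb, ha⟩
    · obtain ⟨σ₁, σ₂, hp, ha, hb⟩ := Stmt5Aux.construct α₂ h₁ hb1
      exact ⟨σ₁, σ₂, hp, ha, hb⟩
end
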